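/- For every integer a and all natural numbers c, d, the point p = (1/2, 1/4, 1/4, …, 1/4) ∈ ℂ^{c+d+1} is a critical point of Φ_{a,c,d}: all c+d+1 complex partial derivatives of Φ_{a,c,d} vanish at p. Explicitly, at p the following hold: Σ_{i=1}^{c}[log(1−e^{−2πi(z₁+z_{i+1})}) + log(1−e^{2πi(z₁+z_{i+1})}) − log(1−e^{2πi z₁})] − Σ_{i=1}^{d}[log(1−e^{2πi(z₁+z_{c+i+1})}) + log(1−e^{−2πi(z₁+z_{c+i+1})}) − log(1−e^{−2πi z₁})] = −4πi·a·(z₁ − 1/2), and for each i the corresponding four-term log equations vanish. -/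

import Mathlib

open Real

/-- The dilogarithm `Li₂(z) = -∫₀¹ log(1 - t z)/t dt` (principal branch of `log`). -/
noncomputable def Li2 (z : ℂ) : ℂ :=
  -∫ t in (0:ℝ)..1, Complex.log (1 - (t:ℂ) * z) / (t:ℂ)

/-- `ψ(z₁,w)`, the clasp summand of the potential function. -/
noncomputable def psi (z₁ w : ℂ) : ℂ :=
  (1 / (2 * (π:ℂ) * Complex.I)) *
    (Li2 (Complex.exp (-(2*(π:ℂ)*Complex.I) * (z₁ + w)))
     - Li2 (Complex.exp (-(2*(π:ℂ)*Complex.I) * w))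
     + Li2 (Complex.exp (2*(π:ℂ)*Complex.I * w))
     - Li2 (Complex.exp (2*(π:ℂ)*Complex.I * (z₁ + w)))
     + Li2 (Complex.exp (2*(π:ℂ)*Complex.I * z₁)))

/-- `κ(z₁,w)`, the mirror-clasp summand of the potential function. -/
noncomputable def kap (z₁ w : ℂ) : ℂ :=
  (1 / (2 * (π:ℂ) * Complex.I)) *
    (-Li2 (Complex.exp (2*(π:ℂ)*Complex.I * (z₁ + w)))
     + Li2 (Complex.exp (2*(π:ℂ)*Complex.I * w))
     - Li2 (Complex.exp (-(2*(π:ℂ)*Complex.I) * w))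
     + Li2 (Complex.exp (-(2*(π:ℂ)*Complex.I) * (z₁ + w)))
     - Li2 (Complex.exp (-(2*(π:ℂ)*Complex.I) * z₁)))

/-- The potential function `Φ_{a,c,d}` of the Whitehead chain `W_{a,1,c,d}`
(at colors `s₁ = s₂ = 1`). -/
noncomputable def PhiACD (a : ℤ) (c d : ℕ) (z : Fin (c + d + 1) → ℂ) : ℂ :=
  ((a : ℂ) / (2 * (π:ℂ) * Complex.I)) * (2*(π:ℂ)*Complex.I * (z 0 - 1/2))^2
  + ∑ i : Fin c, psi (z 0) (z ⟨i.1 + 1, by have := i.isLt; omega⟩)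
  + ∑ i : Fin d, kap (z 0) (z ⟨c + i.1 + 1, by have := i.isLt; omega⟩)

/-- The point `p = (1/2, 1/4, …, 1/4) ∈ ℂ^{c+d+1}`. -/
noncomputable def critPt (c d : ℕ) : Fin (c + d + 1) → ℂ :=
  fun j => if j = 0 then 1/2 else 1/4

/-!
Differentiating under the integral sign gives `Li₂'(z) = -log (1 - z) / z` for `Re z < 1`, so
`L(s) = Li₂(e^{2πis}) / (2πi)` satisfies `L'(s) = -log (1 - e^{2πis})`. Both `ψ` and `κ` have the
shape `G(z₁ + w) - G(w) + H(z₁)` with `G(s) = L(-s) - L(s)`, and for real `s` the derivative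
`G'(s) = log (1 - e^{-2πis}) + log (1 - e^{2πis})` equals `log |1 - e^{2πis}|²`. At `p` the
exponentials `e^{2πiw}`, `e^{2πi(z₁+w)}` are `±i` and `e^{±2πiz₁} = -1`, so `G'` equals `log 2` at
both `w` and `z₁ + w` while `H'(z₁) = -log 2`: every clasp summand is critical at `(1/2, 1/4)`,
and so is the quadratic term at `z₁ = 1/2`.
-/

open Complex Set MeasureTheory Metric

lemma re_one_sub_ofReal_mul_ge {t : ℝ} (ht : t ∈ Icc (0:ℝ) 1) (w : ℂ) :
    min 1 (1 - w.re) ≤ (1 - (t:ℂ) * w).re := by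
  simp only [sub_re, one_re, re_ofReal_mul]
  rcases le_total w.re 0 with hw | hw
  · exact (min_le_left _ _).trans (by nlinarith [ht.1])
  · exact (min_le_right _ _).trans (by nlinarith [ht.2])

lemma hasDerivAt_log_one_sub_ofReal_mul {z : ℂ} {t : ℝ} (h : 0 < (1 - (t:ℂ) * z).re) :
    HasDerivAt (fun s : ℝ => log (1 - s * z)) (-z / (1 - t * z)) t := by
  have := ((((hasDerivAt_id (t:ℂ)).mul_const z).const_sub 1).clog (Or.inl h)).comp_ofReal
  simpa [neg_div] using this

lemma norm_log_one_sub_ofReal_mul_le {z : ℂ} {ε : ℝ} (hε : 0 < ε)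
    (hre : ∀ s ∈ Icc (0:ℝ) 1, ε ≤ (1 - (s:ℂ) * z).re) {t : ℝ} (ht : t ∈ Icc (0:ℝ) 1) :
    ‖log (1 - t * z)‖ ≤ ‖z‖ / ε * t := by
  have hbound := norm_image_sub_le_of_norm_deriv_le_segment' (C := ‖z‖ / ε)
    (fun s hs => (hasDerivAt_log_one_sub_ofReal_mul (hε.trans_le (hre s hs))).hasDerivWithinAt)
    (fun s hs => ?_) t ht
  · simpa using hbound
  have hs : s ∈ Icc (0:ℝ) 1 := Ico_subset_Icc_self hs
  rw [norm_div, norm_neg]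
  gcongr
  exact (hre s hs).trans (re_le_norm _)

lemma integral_inv_one_sub_ofReal_mul {z : ℂ} (hz : z ≠ 0)
    (hre : ∀ t ∈ Icc (0:ℝ) 1, 0 < (1 - (t:ℂ) * z).re) :
    ∫ t in (0:ℝ)..1, (1 - (t:ℂ) * z)⁻¹ = -log (1 - z) / z := by
  have hne : ∀ t ∈ Icc (0:ℝ) 1, 1 - (t:ℂ) * z ≠ 0 := fun t ht h => by
    simpa [h] using hre t ht
  rw [intervalIntegral.integral_eq_sub_of_hasDerivAt (f := fun t : ℝ => -log (1 - t * z) / z)]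
  · simp
  · intro t ht
    rw [uIcc_of_le zero_le_one] at ht
    refine (((hasDerivAt_log_one_sub_ofReal_mul (hre t ht)).fun_neg).div_const z).congr_deriv ?_
    field_simp [hne t ht]
  · refine ContinuousOn.intervalIntegrable ?_
    rw [uIcc_of_le zero_le_one]
    exact ContinuousOn.inv₀ (by fun_prop) hne

lemma measurable_log_one_sub_ofReal_mul_div (z : ℂ) :
    Measurable fun t : ℝ => log (1 - t * z) / t :=
  (measurable_const.sub (measurable_ofReal.mul_const z)).clog.div measurable_ofReal

lemma intervalIntegrable_log_one_sub_ofReal_mul_div {z : ℂ} {ε : ℝ} (hε : 0 < ε)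
    (hre : ∀ t ∈ Icc (0:ℝ) 1, ε ≤ (1 - (t:ℂ) * z).re) :
    IntervalIntegrable (fun t : ℝ => log (1 - t * z) / t) volume 0 1 := by
  refine (intervalIntegrable_const (c := ‖z‖ / ε)).mono_fun'
    (measurable_log_one_sub_ofReal_mul_div z).aestronglyMeasurable ?_
  rw [Filter.EventuallyLE, uIoc_of_le zero_le_one, ae_restrict_iff' measurableSet_Ioc]
  refine .of_forall fun t ht => ?_
  have ht' : t ∈ Icc (0:ℝ) 1 := Ioc_subset_Icc_self ht
  rw [norm_div, norm_real, Real.norm_of_nonneg ht'.1, div_le_iff₀ ht.1]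
  exact norm_log_one_sub_ofReal_mul_le hε hre ht'

lemma hasDerivAt_log_one_sub_ofReal_mul_div {x : ℂ} {t : ℝ} (ht : t ≠ 0)
    (h : 0 < (1 - (t:ℂ) * x).re) :
    HasDerivAt (fun x => log (1 - (t:ℂ) * x) / t) (-(1 - (t:ℂ) * x)⁻¹) x := by
  have hne : 1 - (t:ℂ) * x ≠ 0 := fun h' => by simp [h'] at h
  have ht' : (t:ℂ) ≠ 0 := ofReal_ne_zero.mpr ht
  refine ((((hasDerivAt_id x).const_mul (t:ℂ)).const_sub 1).clog (Or.inl h)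
    |>.div_const (t:ℂ)).congr_deriv ?_
  simp only [id]
  field_simp

lemma le_re_one_sub_ofReal_mul_of_mem_ball {z w : ℂ} (hw : w ∈ ball z (min 1 ((1 - z.re) / 2)))
    {t : ℝ} (ht : t ∈ Icc (0:ℝ) 1) : min 1 ((1 - z.re) / 2) ≤ (1 - (t:ℂ) * w).re := by
  have hw' := (abs_re_le_norm (w - z)).trans_lt (mem_ball_iff_norm.mp hw)
  rw [sub_re, abs_lt] at hw'
  refine le_trans (min_le_min le_rfl ?_) (re_one_sub_ofReal_mul_ge ht w)
  linarith [min_le_right 1 ((1 - z.re) / 2)]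

theorem hasDerivAt_Li2 {z : ℂ} (hz : z ≠ 0) (hre : z.re < 1) :
    HasDerivAt Li2 (-log (1 - z) / z) z := by
  set ε := min 1 ((1 - z.re) / 2)
  have hε : 0 < ε := lt_min one_pos (by linarith)
  have hball : ∀ w ∈ ball z ε, ∀ t ∈ Icc (0:ℝ) 1, ε ≤ (1 - (t:ℂ) * w).re :=
    fun w hw t ht => le_re_one_sub_ofReal_mul_of_mem_ball hw ht
  have hre_z := hball z (mem_ball_self hε)
  have key := intervalIntegral.hasDerivAt_integral_of_dominated_loc_of_deriv_le
    (F' := fun x t => -(1 - (t:ℂ) * x)⁻¹) (bound := fun _ => 1 / ε) (ball_mem_nhds z hε)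
    (.of_forall fun x => (measurable_log_one_sub_ofReal_mul_div x).aestronglyMeasurable)
    (intervalIntegrable_log_one_sub_ofReal_mul_div hε hre_z) (by fun_prop) ?_
    intervalIntegrable_const ?_
  · have := key.2.fun_neg
    rwa [intervalIntegral.integral_neg, neg_neg,
      integral_inv_one_sub_ofReal_mul hz fun t ht => hε.trans_le (hre_z t ht)] at this
  · refine .of_forall fun t ht x hx => ?_
    rw [uIoc_of_le zero_le_one] at ht
    rw [norm_neg, norm_inv, one_div]
    exact inv_anti₀ hε ((hball x hx t (Ioc_subset_Icc_self ht)).trans (re_le_norm _))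
  · refine .of_forall fun t ht x hx => ?_
    rw [uIoc_of_le zero_le_one] at ht
    exact hasDerivAt_log_one_sub_ofReal_mul_div ht.1.ne'
      (hε.trans_le (hball x hx t (Ioc_subset_Icc_self ht)))

noncomputable def Li2e (s : ℂ) : ℂ := Li2 (exp (2 * π * I * s)) / (2 * π * I)

lemma hasDerivAt_Li2e {s : ℂ} (hre : (exp (2 * π * I * s)).re < 1) :
    HasDerivAt Li2e (-log (1 - exp (2 * π * I * s))) s := by
  have hexp : HasDerivAt (fun s => exp (2 * π * I * s)) (exp (2 * π * I * s) * (2 * π * I)) s := by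
    simpa using ((hasDerivAt_id s).const_mul (2 * π * I)).cexp
  refine (((hasDerivAt_Li2 (exp_ne_zero _) hre).comp s hexp).div_const _).congr_deriv ?_
  field_simp [Complex.exp_ne_zero, two_pi_I_ne_zero]

lemma psi_eq_Li2e (z₁ w : ℂ) :
    psi z₁ w = (Li2e (-(z₁ + w)) - Li2e (z₁ + w)) - (Li2e (-w) - Li2e w) + Li2e z₁ := by
  simp only [psi, Li2e, neg_mul_comm]
  ring

lemma kap_eq_Li2e (z₁ w : ℂ) :
    kap z₁ w = (Li2e (-(z₁ + w)) - Li2e (z₁ + w)) - (Li2e (-w) - Li2e w) + -Li2e (-z₁) := by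
  simp only [kap, Li2e, neg_mul_comm]
  ring

lemma hasFDerivAt_sub_add_eq_zero {G H : ℂ → ℂ} {g z₁ w : ℂ} (hG₁ : HasDerivAt G g (z₁ + w))
    (hG₂ : HasDerivAt G g w) (hH : HasDerivAt H (-g) z₁) :
    HasFDerivAt (fun q : ℂ × ℂ => G (q.1 + q.2) - G q.2 + H q.1) (0 : ℂ × ℂ →L[ℂ] ℂ) (z₁, w) := by
  have hsum : HasFDerivAt (fun q : ℂ × ℂ => q.1 + q.2)
      (ContinuousLinearMap.fst ℂ ℂ ℂ + ContinuousLinearMap.snd ℂ ℂ ℂ) (z₁, w) :=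
    hasFDerivAt_fst.fun_add hasFDerivAt_snd
  have h₁ := hG₁.comp_hasFDerivAt (z₁, w) hsum
  have h₂ := hG₂.comp_hasFDerivAt (z₁, w) (hasFDerivAt_snd (𝕜 := ℂ) (p := (z₁, w)))
  have h₃ := hH.comp_hasFDerivAt (z₁, w) (hasFDerivAt_fst (𝕜 := ℂ) (p := (z₁, w)))
  refine ((h₁.sub h₂).add h₃).congr_fderiv ?_
  ext <;> simp

open ComplexConjugate in
lemma log_conj_add_log {x : ℂ} (h : x.arg ≠ π) : log (conj x) + log x = Real.log (normSq x) := by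
  rw [log_conj x h, add_comm, add_conj, log_re, normSq_eq_norm_sq, Real.log_pow]
  push_cast
  ring

open ComplexConjugate in
lemma log_one_sub_I_add_log_one_add_I : log (1 - I) + log (1 + I) = Complex.log 2 := by
  have harg : (1 + I).arg ≠ π := fun h => by simpa using (arg_eq_pi_iff.mp h).2
  have hconj : conj (1 + I) = 1 - I := by simp [conj_I, sub_eq_add_neg]
  have hnormSq : normSq (1 + I) = 2 := by norm_num [normSq_apply]
  rw [← hconj, log_conj_add_log harg, hnormSq, ofReal_log zero_le_two, ofReal_ofNat]

lemma exp_two_pi_I_mul_neg (s : ℂ) : exp (2 * π * I * -s) = (exp (2 * π * I * s))⁻¹ := by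
  rw [mul_neg, Complex.exp_neg]

lemma exp_two_pi_I_mul_quarter : exp (2 * π * I * (1 / 4)) = I := by
  rw [show 2 * π * I * (1 / 4) = π / 2 * I by ring, exp_pi_div_two_mul_I]

lemma exp_two_pi_I_mul_half : exp (2 * π * I * (1 / 2)) = -1 := by
  rw [show 2 * π * I * (1 / 2) = π * I by ring, exp_pi_mul_I]

lemma exp_two_pi_I_mul_three_quarters : exp (2 * π * I * (1 / 2 + 1 / 4)) = -I := by
  rw [mul_add, Complex.exp_add, exp_two_pi_I_mul_half, exp_two_pi_I_mul_quarter]; ring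

lemma hasDerivAt_Li2e_neg_sub_Li2e {s : ℂ} (h₁ : (exp (2 * π * I * -s)).re < 1)
    (h₂ : (exp (2 * π * I * s)).re < 1) :
    HasDerivAt (fun s => Li2e (-s) - Li2e s)
      (log (1 - exp (2 * π * I * -s)) + log (1 - exp (2 * π * I * s))) s := by
  refine (((hasDerivAt_Li2e h₁).comp s (hasDerivAt_neg s)).sub (hasDerivAt_Li2e h₂)).congr_deriv ?_
  ring

lemma hasFDerivAt_Li2e_clasp {H : ℂ → ℂ} (hH : HasDerivAt H (-Complex.log 2) (1 / 2)) :
    HasFDerivAt (fun q : ℂ × ℂ =>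
        (Li2e (-(q.1 + q.2)) - Li2e (q.1 + q.2)) - (Li2e (-q.2) - Li2e q.2) + H q.1)
      (0 : ℂ × ℂ →L[ℂ] ℂ) (1 / 2, 1 / 4) := by
  have hG₁ := hasDerivAt_Li2e_neg_sub_Li2e (s := 1 / 2 + 1 / 4)
    (by rw [exp_two_pi_I_mul_neg, exp_two_pi_I_mul_three_quarters]; simp)
    (by rw [exp_two_pi_I_mul_three_quarters]; simp)
  have hG₂ := hasDerivAt_Li2e_neg_sub_Li2e (s := 1 / 4)
    (by rw [exp_two_pi_I_mul_neg, exp_two_pi_I_mul_quarter]; simp)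
    (by rw [exp_two_pi_I_mul_quarter]; simp)
  simp only [exp_two_pi_I_mul_neg, exp_two_pi_I_mul_three_quarters, exp_two_pi_I_mul_quarter,
    inv_neg, inv_I, neg_neg, sub_neg_eq_add] at hG₁ hG₂
  rw [log_one_sub_I_add_log_one_add_I] at hG₁
  rw [add_comm, log_one_sub_I_add_log_one_add_I] at hG₂
  exact hasFDerivAt_sub_add_eq_zero hG₁ hG₂ hH

lemma hasFDerivAt_psi_half_quarter :
    HasFDerivAt (fun q : ℂ × ℂ => psi q.1 q.2) (0 : ℂ × ℂ →L[ℂ] ℂ) (1 / 2, 1 / 4) := by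
  have hH := hasDerivAt_Li2e (s := 1 / 2) (by rw [exp_two_pi_I_mul_half]; simp)
  rw [exp_two_pi_I_mul_half, sub_neg_eq_add, one_add_one_eq_two] at hH
  simpa only [psi_eq_Li2e] using hasFDerivAt_Li2e_clasp hH

lemma hasFDerivAt_kap_half_quarter :
    HasFDerivAt (fun q : ℂ × ℂ => kap q.1 q.2) (0 : ℂ × ℂ →L[ℂ] ℂ) (1 / 2, 1 / 4) := by
  have hL := hasDerivAt_Li2e (s := -(1 / 2))
    (by rw [exp_two_pi_I_mul_neg, exp_two_pi_I_mul_half]; simp)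
  have hH := (hL.comp (1 / 2) (hasDerivAt_neg _)).fun_neg
  rw [exp_two_pi_I_mul_neg, exp_two_pi_I_mul_half, inv_neg, inv_one, sub_neg_eq_add,
    one_add_one_eq_two] at hH
  simpa only [kap_eq_Li2e] using
    hasFDerivAt_Li2e_clasp (H := fun s => -Li2e (-s)) (hH.congr_deriv (by ring))

lemma critPt_zero (c d : ℕ) : critPt c d 0 = 1 / 2 := if_pos rfl

lemma critPt_of_ne_zero {c d : ℕ} {j : Fin (c + d + 1)} (hj : j ≠ 0) : critPt c d j = 1 / 4 :=
  if_neg hj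

lemma hasFDerivAt_zero_comp_apply_prod {𝕜 ι F : Type*} [NontriviallyNormedField 𝕜] [Fintype ι]
    [NormedAddCommGroup F] [NormedSpace 𝕜 F] {f : 𝕜 × 𝕜 → F} {z : ι → 𝕜} {i j : ι}
    (hf : HasFDerivAt f (0 : 𝕜 × 𝕜 →L[𝕜] F) (z i, z j)) :
    HasFDerivAt (fun x : ι → 𝕜 => f (x i, x j)) (0 : (ι → 𝕜) →L[𝕜] F) z := by
  have := hf.comp (f := fun x : ι → 𝕜 => (x i, x j)) z
    ((hasFDerivAt_apply i z).prodMk (hasFDerivAt_apply j z))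
  rwa [ContinuousLinearMap.zero_comp] at this

theorem hasFDerivAt_PhiACD_critPt (a : ℤ) (c d : ℕ) :
    HasFDerivAt (PhiACD a c d) (0 : (Fin (c + d + 1) → ℂ) →L[ℂ] ℂ) (critPt c d) := by
  have hquad : HasDerivAt (fun t : ℂ => (a / (2 * π * I)) * (2 * π * I * (t - 1 / 2)) ^ 2) 0
      (critPt c d 0) := by
    rw [critPt_zero]
    refine (((((hasDerivAt_id (1 / 2 : ℂ)).sub_const (1 / 2)).const_mul (2 * π * I)).pow 2
      ).const_mul ((a : ℂ) / (2 * π * I))).congr_deriv ?_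
    simp
  have hpsi : ∀ i : Fin c, HasFDerivAt (fun z : Fin (c + d + 1) → ℂ =>
      psi (z 0) (z ⟨i.1 + 1, by omega⟩)) (0 : (Fin (c + d + 1) → ℂ) →L[ℂ] ℂ) (critPt c d) :=
    fun i => hasFDerivAt_zero_comp_apply_prod (f := fun q => psi q.1 q.2) (by
      rw [critPt_zero, critPt_of_ne_zero (by simp [Fin.ext_iff])]
      exact hasFDerivAt_psi_half_quarter)
  have hkap : ∀ i : Fin d, HasFDerivAt (fun z : Fin (c + d + 1) → ℂ =>
      kap (z 0) (z ⟨c + i.1 + 1, by omega⟩)) (0 : (Fin (c + d + 1) → ℂ) →L[ℂ] ℂ) (critPt c d) :=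
    fun i => hasFDerivAt_zero_comp_apply_prod (f := fun q => kap q.1 q.2) (by
      rw [critPt_zero, critPt_of_ne_zero (by simp [Fin.ext_iff])]
      exact hasFDerivAt_kap_half_quarter)
  have := ((hquad.comp_hasFDerivAt (critPt c d) (hasFDerivAt_apply 0 (critPt c d))).add
    (HasFDerivAt.fun_sum (u := Finset.univ) fun i _ => hpsi i)).add
    (HasFDerivAt.fun_sum (u := Finset.univ) fun i _ => hkap i)
  exact this.congr_fderiv (by simp)

theorem stmt_14 (a : ℤ) (c d : ℕ) :
    -- all `c+d+1` complex partial derivatives of `Φ_{a,c,d}` vanish at `p`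
    (∀ k : Fin (c + d + 1),
      deriv (fun t : ℂ => PhiACD a c d (Function.update (critPt c d) k t)) (critPt c d k) = 0) ∧
    -- explicitly, at `p` (where `z₁ = 1/2` and all other coordinates are `1/4`):
    (∑ _i : Fin c,
        (Complex.log (1 - Complex.exp (-(2*(π:ℂ)*Complex.I) * ((1:ℂ)/2 + 1/4)))
         + Complex.log (1 - Complex.exp (2*(π:ℂ)*Complex.I * ((1:ℂ)/2 + 1/4)))
         - Complex.log (1 - Complex.exp (2*(π:ℂ)*Complex.I * ((1:ℂ)/2))))
      - ∑ _i : Fin d,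
        (Complex.log (1 - Complex.exp (2*(π:ℂ)*Complex.I * ((1:ℂ)/2 + 1/4)))
         + Complex.log (1 - Complex.exp (-(2*(π:ℂ)*Complex.I) * ((1:ℂ)/2 + 1/4)))
         - Complex.log (1 - Complex.exp (-(2*(π:ℂ)*Complex.I) * ((1:ℂ)/2)))) =
      -(4*(π:ℂ)*Complex.I) * (a : ℂ) * ((1:ℂ)/2 - 1/2)) ∧
    -- the four-term log equation corresponding to each clasp `i = 1, …, c`
    (∀ _i : Fin c,
      Complex.log (1 - Complex.exp (-(2*(π:ℂ)*Complex.I) * ((1:ℂ)/2 + 1/4)))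
      + Complex.log (1 - Complex.exp (2*(π:ℂ)*Complex.I * ((1:ℂ)/2 + 1/4)))
      - Complex.log (1 - Complex.exp (-(2*(π:ℂ)*Complex.I) * ((1:ℂ)/4)))
      - Complex.log (1 - Complex.exp (2*(π:ℂ)*Complex.I * ((1:ℂ)/4))) = 0) ∧
    -- the four-term log equation corresponding to each mirror clasp `i = 1, …, d`
    (∀ _i : Fin d,
      Complex.log (1 - Complex.exp (2*(π:ℂ)*Complex.I * ((1:ℂ)/2 + 1/4)))
      + Complex.log (1 - Complex.exp (-(2*(π:ℂ)*Complex.I) * ((1:ℂ)/2 + 1/4)))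
      - Complex.log (1 - Complex.exp (2*(π:ℂ)*Complex.I * ((1:ℂ)/4)))
      - Complex.log (1 - Complex.exp (-(2*(π:ℂ)*Complex.I) * ((1:ℂ)/4))) = 0) := by
  have hlog : log (1 - I) + log (1 - -I) - log (1 - -1 : ℂ) = 0 := by
    rw [sub_neg_eq_add, log_one_sub_I_add_log_one_add_I]; norm_num
  simp only [neg_mul, Complex.exp_neg, exp_two_pi_I_mul_three_quarters, exp_two_pi_I_mul_half,
    exp_two_pi_I_mul_quarter, inv_neg, inv_I, inv_one, neg_neg]
  refine ⟨fun k => ?_, ?_, fun _ => by ring, fun _ => by ring⟩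
  · have hΦ := hasFDerivAt_PhiACD_critPt a c d
    rw [← Function.update_eq_self k (critPt c d)] at hΦ
    simpa [Function.comp_def] using
      (hΦ.comp_hasDerivAt _ (hasDerivAt_update (critPt c d) k (critPt c d k))).deriv
  · rw [add_comm (log (1 - -I)), hlog]
    simp
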